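/- arXiv:1001.1220 — 3 statements merged into one kernel-verified Lean document; each statement's English description precedes it below -/
import Mathlib

section
/- Let γ be a vertex of Γ. Then α(γ,η) ≥ 0 for all vertices η adjacent to γ except at most one. More precisely, if α(γ,η) ≤ 0 for some η ∼ γ, then α(γ,ν) > 0 for every vertex ν ∼ γ with ν ≠ η, unless α(γ,η) = 0, d̂_γ = 0 and γ has exactly two adjacent vertices η and η′, in which case also α(γ,η′) = 0. -/
open Matrix Finset

namespace ProxSetting

variable {N : ℕ}

/-- The combinatorial axioms for a proximity matrix. -/
def IsProximityMatrix (P : Matrix (Fin N) (Fin N) ℤ) : Prop :=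
  (∀ μ, P μ μ = 1) ∧
  (∀ μ ν : Fin N, μ < ν → P μ ν = 0) ∧
  (∀ μ ν : Fin N, ν < μ → P μ ν = 0 ∨ P μ ν = -1) ∧
  (∀ μ : Fin N, (∃ ρ, ρ < μ) →
      (Finset.univ.filter fun ν => ν < μ ∧ P μ ν = -1).Nonempty ∧
      (Finset.univ.filter fun ν => ν < μ ∧ P μ ν = -1).card ≤ 2) ∧
  (∀ μ ν ρ : Fin N, ν < ρ → P μ ν = -1 → P μ ρ = -1 → P ρ ν = -1) ∧
  (∀ ν ρ μ₁ μ₂ : Fin N, ν < ρ →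
      P μ₁ ν = -1 → P μ₁ ρ = -1 → P μ₂ ν = -1 → P μ₂ ρ = -1 → μ₁ = μ₂)

/-- `w(ν) = (PᵀP)_{νν}`. -/
def wght (P : Matrix (Fin N) (Fin N) ℤ) (ν : Fin N) : ℤ := (Pᵀ * P) ν ν

/-- The dual graph: distinct `μ, ν` are adjacent iff `(PᵀP)_{μν} = -1`. -/
def graph (P : Matrix (Fin N) (Fin N) ℤ) : SimpleGraph (Fin N) where
  Adj μ ν := μ ≠ ν ∧ (Pᵀ * P) μ ν = -1
  symm := by
    constructor
    intro μ ν h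
    refine ⟨h.1.symm, ?_⟩
    have : (Pᵀ * P) ν μ = (Pᵀ * P) μ ν := by
      simp only [Matrix.mul_apply, Matrix.transpose_apply]
      exact Finset.sum_congr rfl fun x _ => mul_comm _ _
    rw [this]; exact h.2
  loopless := ⟨fun μ h => h.1 rfl⟩

instance (P : Matrix (Fin N) (Fin N) ℤ) : DecidableRel (graph P).Adj :=
  fun μ ν => inferInstanceAs (Decidable (μ ≠ ν ∧ (Pᵀ * P) μ ν = -1))

/-- `d* = d̂·Q` where `Q = P⁻¹`. -/
noncomputable def dstar (P : Matrix (Fin N) (Fin N) ℤ) (dh : Fin N → ℤ) (ν : Fin N) : ℤ :=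
  ∑ μ, dh μ * P⁻¹ μ ν

/-- `d = d̂·Q·Qᵀ`. -/
noncomputable def dd (P : Matrix (Fin N) (Fin N) ℤ) (dh : Fin N → ℤ) (ν : Fin N) : ℤ :=
  ∑ ρ, dstar P dh ρ * P⁻¹ ν ρ

/-- `k_ν = Σ_μ q_{νμ}`. -/
noncomputable def kk (P : Matrix (Fin N) (Fin N) ℤ) (ν : Fin N) : ℤ :=
  ∑ μ, P⁻¹ ν μ

/-- `λ(a,ν) = (a + k_ν + 1)/d_ν`. -/
noncomputable def lam (P : Matrix (Fin N) (Fin N) ℤ) (dh : Fin N → ℤ) (a : ℤ) (ν : Fin N) :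
    ℚ :=
  ((a : ℚ) + (kk P ν : ℚ) + 1) / (dd P dh ν : ℚ)

/-- A vector is antinef if every entry of `f·Pᵀ·P` is nonnegative. -/
def Antinef (P : Matrix (Fin N) (Fin N) ℤ) (f : Fin N → ℤ) : Prop :=
  ∀ ν, 0 ≤ ∑ μ, f μ * (Pᵀ * P) μ ν

/-- `ξ_f = min_ν λ(f_ν, ν)`. -/
noncomputable def xiF [NeZero N] (P : Matrix (Fin N) (Fin N) ℤ) (dh : Fin N → ℤ)
    (f : Fin N → ℤ) : ℚ :=
  Finset.univ.inf'
    (Finset.univ_nonempty_iff.mpr ⟨⟨0, Nat.pos_of_ne_zero (NeZero.ne N)⟩⟩)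
    fun ν => lam P dh (f ν) ν

/-- graph distance from a vertex to a set of vertices. -/
noncomputable def distSet (P : Matrix (Fin N) (Fin N) ℤ) (ν : Fin N) (S : Finset (Fin N)) :
    ℕ :=
  sInf {n | ∃ μ ∈ S, (graph P).dist ν μ = n}

/-- `α(γ,ν) = k_ν + 1 − d_ν·(k_γ+1)/d_γ`. -/
noncomputable def alpha (P : Matrix (Fin N) (Fin N) ℤ) (dh : Fin N → ℤ) (γ ν : Fin N) : ℚ :=
  (kk P ν : ℚ) + 1 - (dd P dh ν : ℚ) * ((kk P γ : ℚ) + 1) / (dd P dh γ : ℚ)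

set_option linter.unusedSectionVars false

/-- prox set as a finset -/
def proxF (P : Matrix (Fin N) (Fin N) ℤ) (μ : Fin N) : Finset (Fin N) :=
  Finset.univ.filter fun ν => ν < μ ∧ P μ ν = -1

lemma mem_proxF {P : Matrix (Fin N) (Fin N) ℤ} {μ ν : Fin N} :
    ν ∈ proxF P μ ↔ ν < μ ∧ P μ ν = -1 := by
  simp [proxF]

section basic

variable {P : Matrix (Fin N) (Fin N) ℤ} (hP : IsProximityMatrix P)

include hP

lemma P_repr (μ ν : Fin N) :
    P μ ν = (if ν = μ then 1 else 0) + (if ν ∈ proxF P μ then -1 else 0) := by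
  obtain ⟨h1, h2, h3, _, _, _⟩ := hP
  rcases lt_trichotomy ν μ with h | h | h
  · simp only [mem_proxF, h, true_and, if_neg h.ne]
    rcases h3 μ ν h with h0 | hm1
    · rw [h0]; simp [h0]
    · rw [hm1]; simp [hm1]
  · subst h; simp [h1, mem_proxF]
  · have : P μ ν = 0 := h2 μ ν h
    rw [this]
    simp [mem_proxF, (asymm h : ¬ ν < μ), if_neg h.ne']

lemma detP : P.det = 1 := by
  have ht : Pᵀ.BlockTriangular id := by
    intro i j hij
    exact hP.2.1 j i hij
  rw [← Matrix.det_transpose]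
  rw [Matrix.det_of_upperTriangular ht]
  simp [Matrix.transpose_apply, hP.1]

lemma isUnit_detP : IsUnit P.det := by rw [detP hP]; exact isUnit_one

lemma PQ : P * P⁻¹ = 1 := Matrix.mul_nonsing_inv P (isUnit_detP hP)

lemma QP : P⁻¹ * P = 1 := Matrix.nonsing_inv_mul P (isUnit_detP hP)

/-- row recursion for Q = P⁻¹ -/
lemma Q_rowrec (μ ρ : Fin N) :
    P⁻¹ μ ρ = (if μ = ρ then 1 else 0) + ∑ β ∈ proxF P μ, P⁻¹ β ρ := by
  have h := congrFun (congrFun (PQ hP) μ) ρ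
  rw [Matrix.mul_apply] at h
  have hone : (1 : Matrix (Fin N) (Fin N) ℤ) μ ρ = if μ = ρ then 1 else 0 := by
    simp [Matrix.one_apply]
  rw [hone] at h
  calc P⁻¹ μ ρ = ∑ ν, P μ ν * P⁻¹ ν ρ
        - ∑ ν, (if ν ∈ proxF P μ then (-1:ℤ) else 0) * P⁻¹ ν ρ := by
        have : ∀ ν, P μ ν * P⁻¹ ν ρ =
            (if ν = μ then (1:ℤ) else 0) * P⁻¹ ν ρ
            + (if ν ∈ proxF P μ then (-1:ℤ) else 0) * P⁻¹ ν ρ := by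
          intro ν
          rw [P_repr hP μ ν, add_mul]
        simp_rw [this]
        rw [Finset.sum_add_distrib]
        simp [Finset.sum_ite_eq']
    _ = (if μ = ρ then 1 else 0) + ∑ β ∈ proxF P μ, P⁻¹ β ρ := by
        rw [h]
        have : ∑ ν, (if ν ∈ proxF P μ then (-1:ℤ) else 0) * P⁻¹ ν ρ
            = - ∑ β ∈ proxF P μ, P⁻¹ β ρ := by
          rw [← Finset.sum_neg_distrib, ← Finset.sum_filter_of_ne (p := fun ν => ν ∈ proxF P μ) (by intro x _ hx; by_contra hc; simp [hc] at hx)]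
          rw [show Finset.univ.filter (fun ν => ν ∈ proxF P μ) = proxF P μ by
            ext x; simp]
          apply Finset.sum_congr rfl
          intro ν hν
          simp [hν]
        rw [this]
        ring

omit hP in
/-- strong induction helper -/
lemma fin_strong_ind {C : Fin N → Prop}
    (h : ∀ μ : Fin N, (∀ β : Fin N, β < μ → C β) → C μ) : ∀ μ, C μ := by
  have H : ∀ n : ℕ, ∀ μ : Fin N, μ.val < n → C μ := by
    intro n
    induction n with
    | zero => intro μ hμ; omega
    | succ n ih =>
      intro μ hμ
      exact h μ (fun β hβ => ih β (by omega))
  exact fun μ => H (μ.val + 1) μ (by omega)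

lemma Q_upper_zero : ∀ μ ρ : Fin N, μ < ρ → P⁻¹ μ ρ = 0 := by
  have := fin_strong_ind (C := fun μ => ∀ ρ, μ < ρ → P⁻¹ μ ρ = 0) ?_
  · exact this
  intro μ ih ρ hρ
  rw [Q_rowrec hP]
  rw [if_neg (by exact fun h => absurd h (by rintro rfl; exact lt_irrefl _ hρ))]
  rw [Finset.sum_eq_zero, add_zero]
  intro β hβ
  exact ih β (mem_proxF.mp hβ).1 ρ ((mem_proxF.mp hβ).1.trans hρ)

lemma Q_diag (μ : Fin N) : P⁻¹ μ μ = 1 := by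
  rw [Q_rowrec hP, if_pos rfl]
  rw [Finset.sum_eq_zero, add_zero]
  intro β hβ
  exact Q_upper_zero hP β μ (mem_proxF.mp hβ).1

lemma Q_nonneg : ∀ μ ρ : Fin N, 0 ≤ P⁻¹ μ ρ := by
  have := fin_strong_ind (C := fun μ => ∀ ρ, 0 ≤ P⁻¹ μ ρ) ?_
  · exact this
  intro μ ih ρ
  rw [Q_rowrec hP]
  have h1 : (0:ℤ) ≤ if μ = ρ then 1 else 0 := by positivity
  have h2 : (0:ℤ) ≤ ∑ β ∈ proxF P μ, P⁻¹ β ρ :=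
    Finset.sum_nonneg fun β hβ => ih β (mem_proxF.mp hβ).1 ρ
  omega

/-- multiplicativity: q_{μρ} ≥ q_{μτ} q_{τρ} -/
lemma Q_mult : ∀ μ τ ρ : Fin N, P⁻¹ μ τ * P⁻¹ τ ρ ≤ P⁻¹ μ ρ := by
  have := fin_strong_ind
      (C := fun μ => ∀ τ ρ, P⁻¹ μ τ * P⁻¹ τ ρ ≤ P⁻¹ μ ρ) ?_
  · exact this
  intro μ ih τ ρ
  rcases lt_trichotomy μ τ with h | h | h
  · rw [Q_upper_zero hP μ τ h, zero_mul]
    exact Q_nonneg hP μ ρ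
  · subst h; rw [Q_diag hP, one_mul]
  · -- μ > τ
    rw [Q_rowrec hP μ ρ, Q_rowrec hP μ τ]
    rw [if_neg (by rintro rfl; exact lt_irrefl _ h)]
    rw [zero_add, Finset.sum_mul]
    have : ∑ β ∈ proxF P μ, P⁻¹ β τ * P⁻¹ τ ρ ≤ ∑ β ∈ proxF P μ, P⁻¹ β ρ :=
      Finset.sum_le_sum fun β hβ => ih β (mem_proxF.mp hβ).1 τ ρ
    have h0 : (0:ℤ) ≤ if μ = ρ then 1 else 0 := by positivity
    omega

end basic


section vals

variable {P : Matrix (Fin N) (Fin N) ℤ} (hP : IsProximityMatrix P)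
  {dh : Fin N → ℤ} (hdh : ∀ ν, 0 ≤ dh ν) (hds : ∀ ν, 0 < dstar P dh ν)

include hP

lemma kk_rec (μ : Fin N) : kk P μ = 1 + ∑ β ∈ proxF P μ, kk P β := by
  unfold kk
  simp_rw [Q_rowrec hP μ]
  rw [Finset.sum_add_distrib]
  congr 1
  · simp
  · rw [Finset.sum_comm]

lemma kk_pos (μ : Fin N) : 1 ≤ kk P μ := by
  unfold kk
  have h1 : P⁻¹ μ μ = 1 := Q_diag hP μ
  calc (1:ℤ) = P⁻¹ μ μ := h1.symm
    _ ≤ ∑ ρ, P⁻¹ μ ρ :=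
      Finset.single_le_sum (fun ρ _ => Q_nonneg hP μ ρ) (Finset.mem_univ μ)

include hdh

lemma dstar_mult (τ ρ : Fin N) : dstar P dh τ * P⁻¹ τ ρ ≤ dstar P dh ρ := by
  unfold dstar
  rw [Finset.sum_mul]
  apply Finset.sum_le_sum
  intro μ _
  rw [mul_assoc]
  exact mul_le_mul_of_nonneg_left (Q_mult hP μ τ ρ) (hdh μ)

omit hdh

include hds

lemma dstar_pos' (ρ : Fin N) : 1 ≤ dstar P dh ρ := hds ρ

lemma dd_rec (μ : Fin N) :
    dd P dh μ = dstar P dh μ + ∑ β ∈ proxF P μ, dd P dh β := by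
  unfold dd
  simp_rw [Q_rowrec hP μ]
  simp_rw [mul_add]
  rw [Finset.sum_add_distrib]
  congr 1
  · rw [Finset.sum_congr rfl (fun ρ _ => by
      rw [mul_ite, mul_one, mul_zero])]
    rw [Finset.sum_ite_eq Finset.univ μ (fun ρ => dstar P dh ρ)]
    simp
  · rw [Finset.sum_congr rfl (fun ρ (_ : ρ ∈ Finset.univ) => Finset.mul_sum (proxF P μ) (fun β => P⁻¹ β ρ) (dstar P dh ρ)), Finset.sum_comm]

lemma dd_ge_dstar (μ : Fin N) : dstar P dh μ ≤ dd P dh μ := by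
  unfold dd
  calc dstar P dh μ = dstar P dh μ * P⁻¹ μ μ := by rw [Q_diag hP]; ring
    _ ≤ ∑ ρ, dstar P dh ρ * P⁻¹ μ ρ :=
      Finset.single_le_sum (f := fun ρ => dstar P dh ρ * P⁻¹ μ ρ)
        (fun ρ _ => mul_nonneg (le_of_lt (hds ρ)) (Q_nonneg hP μ ρ)) (Finset.mem_univ μ)

lemma dd_pos (μ : Fin N) : 1 ≤ dd P dh μ :=
  le_trans (hds μ) (dd_ge_dstar hP hds μ)

include hdh hds

/-- key bound: for β proximate to τ, `d*_τ · k_β ≤ d_β`. -/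
lemma dstar_kk_le_dd {β τ : Fin N} (hβ : β ∈ proxF P τ) :
    dstar P dh τ * kk P β ≤ dd P dh β := by
  have hQτβ : ∀ ρ, P⁻¹ β ρ ≤ P⁻¹ τ ρ := by
    intro ρ
    rw [Q_rowrec hP τ ρ]
    have h0 : (0:ℤ) ≤ if τ = ρ then 1 else 0 := by positivity
    have : P⁻¹ β ρ ≤ ∑ β' ∈ proxF P τ, P⁻¹ β' ρ :=
      Finset.single_le_sum (fun b _ => Q_nonneg hP b ρ) hβ
    omega
  unfold kk dd
  rw [Finset.mul_sum]
  apply Finset.sum_le_sum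
  intro ρ _
  have hq : (0:ℤ) ≤ P⁻¹ β ρ := Q_nonneg hP β ρ
  rcases eq_or_lt_of_le hq with h0 | h1
  · rw [← h0, mul_zero, mul_zero]
  · have hb1 : (1:ℤ) ≤ P⁻¹ β ρ := h1
    have hτ1 : (1:ℤ) ≤ P⁻¹ τ ρ := le_trans hb1 (hQτβ ρ)
    calc dstar P dh τ * P⁻¹ β ρ
        ≤ dstar P dh τ * (P⁻¹ τ ρ * P⁻¹ β ρ) := by
          apply mul_le_mul_of_nonneg_left _ (le_of_lt (hds τ))
          exact le_mul_of_one_le_left hq hτ1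
      _ = (dstar P dh τ * P⁻¹ τ ρ) * P⁻¹ β ρ := by ring
      _ ≤ dstar P dh ρ * P⁻¹ β ρ :=
          mul_le_mul_of_nonneg_right (dstar_mult hP hdh τ ρ) hq

end vals


section mainG

variable {P : Matrix (Fin N) (Fin N) ℤ} (hP : IsProximityMatrix P)
  {dh : Fin N → ℤ} (hdh : ∀ ν, 0 ≤ dh ν) (hds : ∀ ν, 0 < dstar P dh ν)

include hP hdh hds

/-- Key lemma: for `β` proximate to `τ`, both `d_β k_τ - k_β d_τ < d_τ` and
`d_τ k_β - k_τ d_β < d_β`. -/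
lemma mainG : ∀ τ β : Fin N, β ∈ proxF P τ →
    dd P dh β * kk P τ - kk P β * dd P dh τ < dd P dh τ ∧
    dd P dh τ * kk P β - kk P τ * dd P dh β < dd P dh β := by
  have main := fin_strong_ind (C := fun τ => ∀ β, β ∈ proxF P τ →
      dd P dh β * kk P τ - kk P β * dd P dh τ < dd P dh τ ∧
      dd P dh τ * kk P β - kk P τ * dd P dh β < dd P dh β) ?_
  · exact main
  intro τ ih β hβ
  obtain ⟨hβlt, hβP⟩ := mem_proxF.mp hβ
  obtain ⟨hne, hcard⟩ := hP.2.2.2.1 τ ⟨β, hβlt⟩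
  have hpos : 0 < (proxF P τ).card := Finset.card_pos.mpr ⟨β, hβ⟩
  have hcard' : (proxF P τ).card = 1 ∨ (proxF P τ).card = 2 := by
    have : (proxF P τ).card ≤ 2 := hcard
    omega
  rcases hcard' with h1 | h2
  · -- free case
    obtain ⟨a, ha⟩ := Finset.card_eq_one.mp h1
    have hβa : β = a := by
      have := hβ; rw [ha, Finset.mem_singleton] at this; exact this
    subst hβa
    have hk := kk_rec hP τ
    rw [ha, Finset.sum_singleton] at hk
    have hd := dd_rec hP hds τ
    rw [ha, Finset.sum_singleton] at hd
    have key := dstar_kk_le_dd hP hdh hds hβ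
    have hkb := kk_pos hP β
    have hdb := dd_pos hP hds β
    have hc := hds τ
    have hnn : 0 ≤ kk P β * dstar P dh τ :=
      mul_nonneg (by linarith) (by linarith)
    constructor
    · rw [hk, hd]; nlinarith [hnn, hc]
    · rw [hk, hd]; nlinarith [key, hdb]
  · -- satellite case
    obtain ⟨a, b, hab, hs⟩ := Finset.card_eq_two.mp h2
    have core : ∀ a b : Fin N, a < b → proxF P τ = {a, b} →
        ∀ x, x ∈ proxF P τ →
        dd P dh x * kk P τ - kk P x * dd P dh τ < dd P dh τ ∧
        dd P dh τ * kk P x - kk P τ * dd P dh x < dd P dh x := by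
      intro a b hab' hs x hx
      have ha : a ∈ proxF P τ := by rw [hs]; simp
      have hb : b ∈ proxF P τ := by rw [hs]; simp
      have hPa : P τ a = -1 := (mem_proxF.mp ha).2
      have hPb : P τ b = -1 := (mem_proxF.mp hb).2
      have hba : P b a = -1 := hP.2.2.2.2.1 τ a b hab' hPa hPb
      have hbτ : b < τ := (mem_proxF.mp hb).1
      have IH := ih b hbτ a (mem_proxF.mpr ⟨hab', hba⟩)
      have hk := kk_rec hP τ
      rw [hs, Finset.sum_pair hab'.ne] at hk
      have hd := dd_rec hP hds τ
      rw [hs, Finset.sum_pair hab'.ne] at hd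
      have keya := dstar_kk_le_dd hP hdh hds ha
      have keyb := dstar_kk_le_dd hP hdh hds hb
      have hka := kk_pos hP a
      have hkb := kk_pos hP b
      have hda := dd_pos hP hds a
      have hdb := dd_pos hP hds b
      have hc := hds τ
      have hnna : 0 ≤ kk P a * dstar P dh τ :=
        mul_nonneg (by linarith) (by linarith)
      have hnnb : 0 ≤ kk P b * dstar P dh τ :=
        mul_nonneg (by linarith) (by linarith)
      rw [hs] at hx
      rcases Finset.mem_insert.mp hx with hxa | hxb
      · subst hxa
        constructor
        · rw [hk, hd]; nlinarith [IH.1, hnna, hc]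
        · rw [hk, hd]; nlinarith [IH.2, keya, hda]
      · have hxb' : x = b := Finset.mem_singleton.mp hxb
        subst hxb'
        constructor
        · rw [hk, hd]; nlinarith [IH.2, hnnb, hc]
        · rw [hk, hd]; nlinarith [IH.1, keyb, hdb]
    rcases lt_or_gt_of_ne hab with h | h
    · exact core a b h hs β hβ
    · exact core b a h (by rw [hs, Finset.pair_comm]) β hβ

end mainG


section Mlemmas

variable {P : Matrix (Fin N) (Fin N) ℤ} (hP : IsProximityMatrix P)

lemma M_symm (μ ν : Fin N) : (Pᵀ * P) μ ν = (Pᵀ * P) ν μ := by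
  simp only [Matrix.mul_apply, Matrix.transpose_apply]
  exact Finset.sum_congr rfl fun x _ => mul_comm _ _

include hP

lemma M_offdiag {μ ν : Fin N} (hμν : μ < ν) :
    (Pᵀ * P) μ ν = 0 ∨ ((Pᵀ * P) μ ν = -1 ∧ P ν μ = -1) := by
  obtain ⟨h1, h2, h3, _, h5, h6⟩ := hP
  set T : Finset (Fin N) := Finset.univ.filter fun ρ => P ρ μ = -1 ∧ P ρ ν = -1 with hT
  have hmemT : ∀ ρ, ρ ∈ T ↔ P ρ μ = -1 ∧ P ρ ν = -1 := by
    intro ρ; simp [hT]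
  have hform : (Pᵀ * P) μ ν = P ν μ + (T.card : ℤ) := by
    rw [Matrix.mul_apply]
    have hterm : ∀ ρ : Fin N, Pᵀ μ ρ * P ρ ν =
        (if ρ = ν then P ν μ else 0) + (if ρ ∈ T then 1 else 0) := by
      intro ρ
      rw [Matrix.transpose_apply]
      rcases eq_or_ne ρ ν with rfl | hρν
      · have : ρ ∉ T := by
          rw [hmemT]; rw [h1 ρ]; rintro ⟨-, h⟩; omega
        rw [if_pos rfl, if_neg this, h1 ρ, mul_one, add_zero]
      · rw [if_neg hρν]
        by_cases hρT : ρ ∈ T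
        · rw [if_pos hρT]
          obtain ⟨ha, hb⟩ := (hmemT ρ).mp hρT
          rw [ha, hb]; ring
        · rw [if_neg hρT, zero_add]
          rcases lt_trichotomy ρ μ with hc | rfl | hc
          · rw [h2 ρ μ hc, zero_mul]
          · rw [h2 ρ ν hμν, mul_zero]
          · rcases h3 ρ μ hc with h0 | hm1
            · rw [h0, zero_mul]
            · rcases lt_trichotomy ρ ν with hd | rfl | hd
              · rw [h2 ρ ν hd, mul_zero]
              · exact absurd rfl hρν
              · rcases h3 ρ ν hd with h0' | hm1'
                · rw [h0', mul_zero]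
                · exact absurd ((hmemT ρ).mpr ⟨hm1, hm1'⟩) hρT
    rw [Finset.sum_congr rfl fun ρ _ => hterm ρ, Finset.sum_add_distrib]
    congr 1
    · rw [Finset.sum_ite_eq' Finset.univ ν fun _ => P ν μ]
      simp
    · rw [Finset.sum_ite_mem, Finset.univ_inter, Finset.sum_const, nsmul_eq_mul, mul_one]
  have hcard : T.card ≤ 1 := by
    rw [Finset.card_le_one]
    intro a ha b hb
    rw [hmemT] at ha hb
    exact h6 μ ν a b hμν ha.1 ha.2 hb.1 hb.2
  have hne : T.Nonempty → P ν μ = -1 := by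
    rintro ⟨ρ, hρ⟩
    rw [hmemT] at hρ
    exact h5 ρ μ ν hμν hρ.1 hρ.2
  rcases h3 ν μ hμν with h0 | hm1
  · left
    rcases Nat.eq_zero_or_pos T.card with hc0 | hc1
    · rw [hform, h0, hc0]; simp
    · have := hne (Finset.card_pos.mp hc1)
      omega
  · rcases Nat.eq_zero_or_pos T.card with hc0 | hc1
    · right; rw [hform, hm1, hc0]; norm_num
    · left
      have : T.card = 1 := le_antisymm hcard hc1
      rw [hform, hm1, this]; norm_num

lemma M_offdiag' {μ ν : Fin N} (h : μ ≠ ν) :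
    (Pᵀ * P) μ ν = 0 ∨ (Pᵀ * P) μ ν = -1 := by
  rcases lt_or_gt_of_ne h with hlt | hgt
  · rcases M_offdiag hP hlt with h0 | hm1
    · exact Or.inl h0
    · exact Or.inr hm1.1
  · rw [M_symm]
    rcases M_offdiag hP hgt with h0 | hm1
    · exact Or.inl h0
    · exact Or.inr hm1.1

/-- adjacency implies the larger vertex is proximate to the smaller -/
lemma adj_prox {γ ν : Fin N} (h : (graph P).Adj γ ν) :
    (ν < γ ∧ ν ∈ proxF P γ) ∨ (γ < ν ∧ γ ∈ proxF P ν) := by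
  obtain ⟨hne, hM⟩ := h
  rcases lt_or_gt_of_ne hne with hlt | hgt
  · right
    refine ⟨hlt, mem_proxF.mpr ⟨hlt, ?_⟩⟩
    rcases M_offdiag hP hlt with h0 | hm1
    · rw [h0] at hM; omega
    · exact hm1.2
  · left
    refine ⟨hgt, mem_proxF.mpr ⟨hgt, ?_⟩⟩
    rw [M_symm] at hM
    rcases M_offdiag hP hgt with h0 | hm1
    · rw [h0] at hM; omega
    · exact hm1.2

/-- splitting a weighted sum against column `γ` of `M` into diagonal and neighbors -/
lemma sum_nbr (γ : Fin N) (x : Fin N → ℤ) :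
    ∑ ν, x ν * (Pᵀ * P) ν γ =
      x γ * (Pᵀ * P) γ γ - ∑ ν ∈ (graph P).neighborFinset γ, x ν := by
  have hsplit := Finset.sum_erase_add Finset.univ (fun ν => x ν * (Pᵀ * P) ν γ)
      (Finset.mem_univ γ)
  rw [← hsplit]
  have hterm : ∀ ν ∈ Finset.univ.erase γ, x ν * (Pᵀ * P) ν γ =
      if ν ∈ (graph P).neighborFinset γ then -x ν else 0 := by
    intro ν hν
    have hne : ν ≠ γ := (Finset.mem_erase.mp hν).1
    by_cases hadj : (graph P).Adj γ ν
    · rw [if_pos (SimpleGraph.mem_neighborFinset _ _ _ |>.mpr hadj)]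
      rw [M_symm ν γ, hadj.2]; ring
    · rw [if_neg (fun hmem => hadj ((SimpleGraph.mem_neighborFinset _ _ _).mp hmem))]
      have hMγν : (Pᵀ * P) γ ν = 0 := by
        rcases M_offdiag' hP hne.symm with h0 | hm1
        · exact h0
        · exact absurd ⟨hne.symm, hm1⟩ hadj
      rw [M_symm ν γ, hMγν, mul_zero]
  rw [Finset.sum_congr rfl hterm]
  have hsub : (graph P).neighborFinset γ ⊆ Finset.univ.erase γ := by
    intro ν hν
    rw [SimpleGraph.mem_neighborFinset] at hν
    exact Finset.mem_erase.mpr ⟨hν.ne', Finset.mem_univ ν⟩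
  rw [Finset.sum_ite_mem, Finset.inter_eq_right.mpr hsub, Finset.sum_neg_distrib]
  ring

end Mlemmas


section sums

variable {P : Matrix (Fin N) (Fin N) ℤ} (hP : IsProximityMatrix P)
  {dh : Fin N → ℤ}

include hP

lemma QQt_M : (P⁻¹ * P⁻¹ᵀ) * (Pᵀ * P) = 1 := by
  have h1 : P⁻¹ᵀ * Pᵀ = 1 := by
    rw [← Matrix.transpose_mul, PQ hP, Matrix.transpose_one]
  calc (P⁻¹ * P⁻¹ᵀ) * (Pᵀ * P) = P⁻¹ * (P⁻¹ᵀ * Pᵀ) * P := by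
        rw [Matrix.mul_assoc, Matrix.mul_assoc, Matrix.mul_assoc]
    _ = P⁻¹ * P := by rw [h1, Matrix.mul_one]
    _ = 1 := QP hP

omit hP

lemma dd_vecMul : dd P dh = dh ᵥ* (P⁻¹ * P⁻¹ᵀ) := by
  funext ν
  unfold dd dstar
  simp only [Matrix.vecMul, dotProduct, Matrix.mul_apply, Matrix.transpose_apply]
  simp_rw [Finset.sum_mul, Finset.mul_sum, mul_assoc]
  exact Finset.sum_comm

include hP

lemma dM (γ : Fin N) : ∑ ν, dd P dh ν * (Pᵀ * P) ν γ = dh γ := by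
  have h1 : ∑ ν, dd P dh ν * (Pᵀ * P) ν γ = ((dd P dh) ᵥ* (Pᵀ * P)) γ := by
    simp [Matrix.vecMul, dotProduct]
  rw [h1, dd_vecMul, Matrix.vecMul_vecMul, QQt_M hP, Matrix.vecMul_one]

lemma kM (γ : Fin N) :
    ∑ ν, kk P ν * (Pᵀ * P) ν γ = 2 - (Pᵀ * P) γ γ := by
  have hk : kk P = (fun _ => (1:ℤ)) ᵥ* P⁻¹ᵀ := by
    funext ν
    unfold kk
    simp [Matrix.vecMul, dotProduct, Matrix.transpose_apply]
  have h1 : ∑ ν, kk P ν * (Pᵀ * P) ν γ = ((kk P) ᵥ* (Pᵀ * P)) γ := by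
    simp [Matrix.vecMul, dotProduct]
  have h2 : P⁻¹ᵀ * (Pᵀ * P) = P := by
    have : P⁻¹ᵀ * Pᵀ = 1 := by
      rw [← Matrix.transpose_mul, PQ hP, Matrix.transpose_one]
    rw [← Matrix.mul_assoc, this, Matrix.one_mul]
  rw [h1, hk, Matrix.vecMul_vecMul, h2]
  have h3 : ((fun _ => (1:ℤ)) ᵥ* P) γ = ∑ μ, P μ γ := by
    simp [Matrix.vecMul, dotProduct]
  rw [h3]
  -- Σ_μ P μ γ = 2 - Σ_μ P μ γ * P μ γ
  have h4 : (Pᵀ * P) γ γ = ∑ μ, P μ γ * P μ γ := by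
    simp [Matrix.mul_apply, Matrix.transpose_apply]
  rw [h4]
  have h5 : ∑ μ, (P μ γ + P μ γ * P μ γ) = 2 := by
    have hterm : ∀ μ : Fin N, P μ γ + P μ γ * P μ γ = if γ = μ then 2 else 0 := by
      intro μ
      rcases lt_trichotomy μ γ with hc | rfl | hc
      · rw [hP.2.1 μ γ hc, if_neg (by omega : ¬ γ = μ)]; ring
      · rw [hP.1 μ, if_pos rfl]; ring
      · rcases hP.2.2.1 μ γ hc with h0 | hm1
        · rw [h0, if_neg (by omega : ¬ γ = μ)]; ring
        · rw [hm1, if_neg (by omega : ¬ γ = μ)]; ring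
    rw [Finset.sum_congr rfl fun μ _ => hterm μ, Finset.sum_ite_eq Finset.univ γ fun _ => (2:ℤ)]
    simp
  rw [Finset.sum_add_distrib] at h5
  omega

end sums


/-- integer numerator of alpha -/
noncomputable def AA (P : Matrix (Fin N) (Fin N) ℤ) (dh : Fin N → ℤ) (γ ν : Fin N) : ℤ :=
  (kk P ν + 1) * dd P dh γ - dd P dh ν * (kk P γ + 1)

section final

variable {P : Matrix (Fin N) (Fin N) ℤ} (hP : IsProximityMatrix P)
  {dh : Fin N → ℤ} (hdh : ∀ ν, 0 ≤ dh ν) (hds : ∀ ν, 0 < dstar P dh ν)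

include hP hds

lemma ddQ_pos (γ : Fin N) : (0:ℚ) < (dd P dh γ : ℚ) := by
  exact_mod_cast lt_of_lt_of_le one_pos (dd_pos hP hds γ)

lemma alpha_eq (γ ν : Fin N) :
    alpha P dh γ ν = (AA P dh γ ν : ℚ) / (dd P dh γ : ℚ) := by
  have h := (ddQ_pos hP hds γ).ne'
  unfold alpha AA
  push_cast
  field_simp

lemma alpha_nonpos_iff (γ ν : Fin N) :
    alpha P dh γ ν ≤ 0 ↔ AA P dh γ ν ≤ 0 := by
  have hd := ddQ_pos hP hds γ
  rw [alpha_eq hP hds]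
  constructor
  · intro h
    by_contra hc
    push_neg at hc
    have : 0 < (AA P dh γ ν : ℚ) / (dd P dh γ : ℚ) :=
      div_pos (by exact_mod_cast hc) hd
    linarith
  · intro h
    apply div_nonpos_of_nonpos_of_nonneg (by exact_mod_cast h) hd.le

lemma alpha_pos_iff (γ ν : Fin N) :
    0 < alpha P dh γ ν ↔ 0 < AA P dh γ ν := by
  have hd := ddQ_pos hP hds γ
  rw [alpha_eq hP hds]
  constructor
  · intro h
    by_contra hc
    push_neg at hc
    have : (AA P dh γ ν : ℚ) / (dd P dh γ : ℚ) ≤ 0 :=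
      div_nonpos_of_nonpos_of_nonneg (by exact_mod_cast hc) hd.le
    linarith
  · intro h
    exact div_pos (by exact_mod_cast h) hd

lemma alpha_zero_iff (γ ν : Fin N) :
    alpha P dh γ ν = 0 ↔ AA P dh γ ν = 0 := by
  rw [alpha_eq hP hds, div_eq_zero_iff]
  have := (ddQ_pos hP hds γ).ne'
  constructor
  · rintro (h | h)
    · exact_mod_cast h
    · exact absurd h this
  · intro h; left; exact_mod_cast h

include hdh

/-- `A(γ,μ) < d_γ` for neighbors `μ` of `γ`. -/
lemma AA_lt {γ μ : Fin N} (h : (graph P).Adj γ μ) : AA P dh γ μ < dd P dh γ := by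
  have key : dd P dh γ * kk P μ - kk P γ * dd P dh μ < dd P dh μ := by
    rcases adj_prox hP h with ⟨_, hm⟩ | ⟨_, hm⟩
    · exact (mainG hP hdh hds γ μ hm).2
    · exact (mainG hP hdh hds μ γ hm).1
  unfold AA
  nlinarith [key]

/-- sum of `A(γ,·)` over the neighbors of `γ` -/
lemma sum_AA (γ : Fin N) :
    ∑ μ ∈ (graph P).neighborFinset γ, AA P dh γ μ =
      (((graph P).neighborFinset γ).card - 2) * dd P dh γ + dh γ * (kk P γ + 1) := by
  have e1 : ∑ μ ∈ (graph P).neighborFinset γ, kk P μ =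
      kk P γ * (Pᵀ * P) γ γ - (2 - (Pᵀ * P) γ γ) := by
    have := sum_nbr hP γ (kk P)
    rw [kM hP γ] at this
    omega
  have e2 : ∑ μ ∈ (graph P).neighborFinset γ, dd P dh μ =
      dd P dh γ * (Pᵀ * P) γ γ - dh γ := by
    have := sum_nbr hP γ (dd P dh)
    rw [dM hP γ] at this
    omega
  unfold AA
  rw [Finset.sum_sub_distrib, ← Finset.sum_mul, ← Finset.sum_mul,
    Finset.sum_add_distrib, Finset.sum_const, e1, e2]
  push_cast
  ring

end final


end ProxSetting

open ProxSetting Matrix Finset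

/-- Lemma 3.3 b): if `α(γ,η) ≤ 0` for some `η ∼ γ`, then `α(γ,ν) > 0` for every other
`ν ∼ γ`, unless `α(γ,η) = 0`, `d̂_γ = 0` and `γ` has exactly two adjacent vertices,
in which case the other one also satisfies `α(γ,ν) = 0`. -/
theorem statement_10 {N : ℕ} (P : Matrix (Fin N) (Fin N) ℤ)
    (hP : IsProximityMatrix P)
    (dh : Fin N → ℤ) (hdh : ∀ ν, 0 ≤ dh ν) (hds : ∀ ν, 0 < dstar P dh ν)
    (γ : Fin N) :
    ∀ η, (graph P).Adj γ η → alpha P dh γ η ≤ 0 →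
      ∀ ν, (graph P).Adj γ ν → ν ≠ η →
        0 < alpha P dh γ ν ∨
        (alpha P dh γ η = 0 ∧ dh γ = 0 ∧ (graph P).degree γ = 2 ∧
          alpha P dh γ ν = 0) := by
  
  intro η hadjη hαη ν hadjν hνη
  rcases lt_or_ge 0 (alpha P dh γ ν) with hαν | hαν'
  · exact Or.inl hαν
  right
  have hAη : AA P dh γ η ≤ 0 := (alpha_nonpos_iff hP hds γ η).mp hαη
  have hAν : AA P dh γ ν ≤ 0 := (alpha_nonpos_iff hP hds γ ν).mp hαν'
  set s := (graph P).neighborFinset γ with hs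
  have hηs : η ∈ s := (SimpleGraph.mem_neighborFinset _ _ _).mpr hadjη
  have hνs : ν ∈ s := (SimpleGraph.mem_neighborFinset _ _ _).mpr hadjν
  have hpair : ({η, ν} : Finset (Fin N)) ⊆ s := by
    intro x hx
    rcases Finset.mem_insert.mp hx with rfl | hx
    · exact hηs
    · rw [Finset.mem_singleton] at hx; subst hx; exact hνs
  have hpaircard : ({η, ν} : Finset (Fin N)).card = 2 :=
    Finset.card_pair (Ne.symm hνη)
  have hcard2 : 2 ≤ s.card := by
    calc 2 = ({η, ν} : Finset (Fin N)).card := hpaircard.symm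
      _ ≤ s.card := Finset.card_le_card hpair
  have hsplit : ∑ μ ∈ s \ {η, ν}, AA P dh γ μ + ∑ μ ∈ ({η, ν} : Finset (Fin N)), AA P dh γ μ
      = ∑ μ ∈ s, AA P dh γ μ := Finset.sum_sdiff hpair
  have hsum := sum_AA hP hdh hds γ
  have htcard : ((s \ {η, ν}).card : ℤ) = (s.card : ℤ) - 2 := by
    rw [Finset.card_sdiff_of_subset hpair, hpaircard]
    omega
  have hbound : ∑ μ ∈ s \ {η, ν}, AA P dh γ μ ≤ ((s.card : ℤ) - 2) * (dd P dh γ - 1) := by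
    have h := Finset.sum_le_card_nsmul (s \ {η, ν}) (fun μ => AA P dh γ μ)
        (dd P dh γ - 1) ?_
    · rw [nsmul_eq_mul] at h
      rw [htcard] at h
      exact h
    · intro μ hμ
      have hms : μ ∈ s := (Finset.mem_sdiff.mp hμ).1
      have := AA_lt hP hdh hds ((SimpleGraph.mem_neighborFinset _ _ _).mp hms)
      show AA P dh γ μ ≤ dd P dh γ - 1
      omega
  have hpairsum : ∑ μ ∈ ({η, ν} : Finset (Fin N)), AA P dh γ μ
      = AA P dh γ η + AA P dh γ ν := Finset.sum_pair (Ne.symm hνη)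
  have hkγ : 1 ≤ kk P γ := kk_pos hP γ
  have hdγ : 1 ≤ dd P dh γ := dd_pos hP hds γ
  have hdhγ : 0 ≤ dh γ := hdh γ
  have hy : 0 ≤ dh γ * (kk P γ + 1) := mul_nonneg hdhγ (by linarith)
  have h1 : ((s.card:ℤ) - 2) * dd P dh γ + dh γ * (kk P γ + 1)
      ≤ ((s.card:ℤ) - 2) * (dd P dh γ - 1) := by
    rw [hpairsum] at hsplit
    linarith [hsum, hsplit, hbound, hAη, hAν]
  have hX : (0:ℤ) ≤ (s.card:ℤ) - 2 := by
    have : (2:ℤ) ≤ (s.card:ℤ) := by exact_mod_cast hcard2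
    linarith
  have hr : ((s.card:ℤ) - 2) * (dd P dh γ - 1)
      = ((s.card:ℤ) - 2) * dd P dh γ - ((s.card:ℤ) - 2) := by ring
  have hX0 : (s.card:ℤ) - 2 = 0 ∧ dh γ * (kk P γ + 1) = 0 := by
    constructor <;> linarith [h1, hr, hX, hy]
  have hdh0 : dh γ = 0 := by
    rcases mul_eq_zero.mp hX0.2 with h | h
    · exact h
    · omega
  have hcard_eq : s.card = 2 := by omega
  have ht0 : ∑ μ ∈ s \ {η, ν}, AA P dh γ μ = 0 := by
    have : (s \ {η, ν}).card = 0 := by omega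
    rw [Finset.card_eq_zero.mp this, Finset.sum_empty]
  have hz1 : ((s.card:ℤ) - 2) * dd P dh γ = 0 := by rw [hX0.1, zero_mul]
  have hsum0 : AA P dh γ η + AA P dh γ ν = 0 := by
    rw [hpairsum, ht0] at hsplit
    linarith [hsum, hsplit, hz1, hX0.2]
  have hAη0 : AA P dh γ η = 0 := by omega
  have hAν0 : AA P dh γ ν = 0 := by omega
  refine ⟨(alpha_zero_iff hP hds γ η).mpr hAη0, hdh0, ?_,
    (alpha_zero_iff hP hds γ ν).mpr hAν0⟩
  have : (graph P).degree γ = s.card := rfl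
  rw [this, hcard_eq]
end

section
/- Assume Γ has at least two vertices. Let τ be an end of Γ (that is, v(τ) = 1) and let μ be the unique vertex adjacent to τ. If g : V → ℤ satisfies g(τ) ≥ 0 and λ(g(τ),τ) > λ(g(μ),μ), then ĝ(τ) = w(τ)·g(τ) − g(μ) ≥ 0. -/
open Finset

namespace TreeSetting

variable {V : Type*}

/-- `λ(a,ν) = (a + k(ν) + 1)/d(ν)`. -/
noncomputable def lam (k d : V → ℤ) (a : ℤ) (ν : V) : ℚ :=
  ((a : ℚ) + (k ν : ℚ) + 1) / (d ν : ℚ)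

/-- `f̂(ν) = w(ν)·f(ν) − Σ_{μ∼ν} f(μ)`. -/
def hatf [Fintype V] [DecidableEq V] (G : SimpleGraph V) [DecidableRel G.Adj]
    (w : V → ℤ) (f : V → ℤ) (ν : V) : ℤ :=
  w ν * f ν - ∑ μ ∈ G.neighborFinset ν, f μ

/-- `α(γ,ν) = k(ν) + 1 − d(ν)·(k(γ)+1)/d(γ)`. -/
noncomputable def alpha (k d : V → ℤ) (γ ν : V) : ℚ :=
  (k ν : ℚ) + 1 - (d ν : ℚ) * ((k γ : ℚ) + 1) / (d γ : ℚ)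

end TreeSetting

open TreeSetting

/-- Lemma 4.2: if `τ` is an end with unique neighbour `μ`, `g(τ) ≥ 0` and
`λ(g(τ),τ) > λ(g(μ),μ)`, then `ĝ(τ) = w(τ)·g(τ) − g(μ) ≥ 0`. -/
theorem statement_14 {V : Type*} [Fintype V] [DecidableEq V] (G : SimpleGraph V)
    [DecidableRel G.Adj] (hconn : G.Connected) (hacyc : G.IsAcyclic)
    (hV : 2 ≤ Fintype.card V)
    (w k d dh : V → ℤ)
    (hw : ∀ ν, 1 ≤ w ν) (hk : ∀ ν, 1 ≤ k ν) (hd : ∀ ν, 1 ≤ d ν) (hdh : ∀ ν, 0 ≤ dh ν)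
    (hreld : ∀ ν, w ν * d ν = dh ν + ∑ μ ∈ G.neighborFinset ν, d μ)
    (hrelk : ∀ ν, w ν * k ν = 2 - w ν + ∑ μ ∈ G.neighborFinset ν, k μ)
    (τ μ : V) (hτ : G.degree τ = 1) (hadj : G.Adj τ μ)
    (g : V → ℤ) (hg : 0 ≤ g τ)
    (hlt : lam k d (g μ) μ < lam k d (g τ) τ) :
    hatf G w g τ = w τ * g τ - g μ ∧ 0 ≤ w τ * g τ - g μ := by
  have hμmem : μ ∈ G.neighborFinset τ := by simpa using hadj
  have hNτ : G.neighborFinset τ = {μ} := by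
    obtain ⟨a, ha⟩ := Finset.card_eq_one.mp hτ
    rw [ha] at hμmem ⊢
    simp_all
  have hhat : hatf G w g τ = w τ * g τ - g μ := by simp [hatf, hNτ]
  refine ⟨hhat, ?_⟩
  have hdτ := hreld τ
  have hkτ := hrelk τ
  rw [hNτ, Finset.sum_singleton] at hdτ hkτ
  have hdτpos : (0:ℚ) < (d τ : ℚ) := by exact_mod_cast lt_of_lt_of_le one_pos (hd τ)
  have hdμpos : (0:ℚ) < (d μ : ℚ) := by exact_mod_cast lt_of_lt_of_le one_pos (hd μ)
  have h1 : (d τ : ℚ) * ((g μ : ℚ) + (k μ : ℚ) + 1) < (d μ : ℚ) * ((g τ : ℚ) + (k τ : ℚ) + 1) := by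
    rw [lam, lam, div_lt_div_iff₀ hdμpos hdτpos] at hlt
    linarith
  have h1' : d τ * (g μ + k μ + 1) < d μ * (g τ + k τ + 1) := by exact_mod_cast h1
  have h2 : d μ ≤ w τ * d τ := by
    have := hdh τ; linarith
  have h3 : 0 < g τ + k τ + 1 := by have := hk τ; linarith
  have h4 : d τ * (g μ + k μ + 1) < d τ * (w τ * (g τ + k τ + 1)) := by
    nlinarith [mul_le_mul_of_nonneg_right h2 (le_of_lt h3)]
  have h5 : g μ + k μ + 1 < w τ * (g τ + k τ + 1) := by
    have hdτz : 0 < d τ := lt_of_lt_of_le one_pos (hd τ)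
    exact lt_of_mul_lt_mul_left h4 (le_of_lt hdτz)
  nlinarith [hk μ, hk τ, hw τ]
end

section
/- The matrix Q := P⁻¹ has nonnegative integer entries, with q_{μμ} = 1 for all μ and q_{ν1} ≥ 1 for every ν. Moreover, (PᵀP)_{μν} ∈ {0,−1} for all μ ≠ ν, and the graph on {1,…,N} in which distinct μ, ν are adjacent exactly when (PᵀP)_{μν} = −1 is a tree (connected and acyclic). -/
open Matrix Finset

open ProxSetting Matrix Finset


section GeneralGraph

set_option linter.unusedSectionVars false

variable {V : Type*} [Fintype V] [DecidableEq V]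

theorem count_lower (G : SimpleGraph V) [Fintype G.edgeSet] (hc : G.Connected) :
    Fintype.card V ≤ G.edgeFinset.card + 1 := by
  classical
  obtain ⟨r⟩ := hc.nonempty
  have H : ∀ w : V, ∃ x, w ≠ r → G.Adj w x ∧ G.dist x r < G.dist w r := by
    intro w
    rcases eq_or_ne w r with rfl | hw
    · exact ⟨w, fun h => absurd rfl h⟩
    · have hdpos : 0 < G.dist w r := hc.pos_dist_of_ne hw
      obtain ⟨p, hp⟩ := hc.exists_walk_length_eq_dist w r
      cases p with
      | nil => simp at hdpos
      | cons h q =>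
        refine ⟨_, fun _ => ⟨h, ?_⟩⟩
        have := SimpleGraph.dist_le q
        simp [SimpleGraph.Walk.length_cons] at hp
        omega
  choose f hf using H
  have hinj : Set.InjOn (fun w => s(w, f w)) (univ.erase r : Finset V) := by
    intro a ha b hb hab
    simp only [Finset.coe_erase, Set.mem_diff, Set.mem_singleton_iff] at ha hb
    have ha' : a ≠ r := by simpa using ha.2
    have hb' : b ≠ r := by simpa using hb.2
    simp only [Sym2.eq_iff] at hab
    rcases hab with ⟨h3, -⟩ | ⟨h3, h4⟩
    · exact h3
    · have h1 := (hf a ha').2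
      have h2 := (hf b hb').2
      rw [h4] at h1
      rw [← h3] at h2
      omega
  have hmap : ∀ w ∈ (univ.erase r : Finset V), s(w, f w) ∈ G.edgeFinset := by
    intro w hw
    rw [SimpleGraph.mem_edgeFinset, SimpleGraph.mem_edgeSet]
    exact (hf w (Finset.mem_erase.mp hw).1).1
  have := Finset.card_le_card_of_injOn _ hmap hinj
  rw [Finset.card_erase_of_mem (mem_univ r), Finset.card_univ] at this
  have : 0 < Fintype.card V := Fintype.card_pos_iff.mpr hc.nonempty
  omega

theorem reach_del (G : SimpleGraph V) {v w : V}
    (hvw : (G \ SimpleGraph.fromEdgeSet {s(v, w)}).Reachable v w) {a b : V} (p : G.Walk a b) :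
    (G \ SimpleGraph.fromEdgeSet {s(v, w)}).Reachable a b := by
  induction p with
  | nil => rfl
  | @cons a c b h q ih =>
    refine SimpleGraph.Reachable.trans ?_ ih
    by_cases he : s(a, c) = s(v, w)
    · rw [Sym2.eq_iff] at he
      rcases he with ⟨rfl, rfl⟩ | ⟨rfl, rfl⟩
      · exact hvw
      · exact hvw.symm
    · apply SimpleGraph.Adj.reachable
      rw [SimpleGraph.sdiff_adj, SimpleGraph.fromEdgeSet_adj]
      exact ⟨h, fun hh => he hh.1⟩

theorem tree_of_connected_card (G : SimpleGraph V) [Fintype G.edgeSet]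
    (hc : G.Connected) (hcard : G.edgeFinset.card + 1 = Fintype.card V) : G.IsTree := by
  classical
  refine ⟨hc, ?_⟩
  intro u c hcyc
  have hne : c.edges ≠ [] := by
    intro h
    have h3 := hcyc.three_le_length
    have h0 : c.length = 0 := by
      rw [← SimpleGraph.Walk.length_edges, h]
      rfl
    omega
  obtain ⟨e, he⟩ := List.exists_mem_of_ne_nil _ hne
  induction e using Sym2.ind with
  | _ v w =>
  have key : G.Adj v w ∧ (G \ SimpleGraph.fromEdgeSet {s(v, w)}).Reachable v w :=
    SimpleGraph.adj_and_reachable_delete_edges_iff_exists_cycle.mpr ⟨u, c, hcyc, he⟩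
  set G' := G \ SimpleGraph.fromEdgeSet {s(v, w)} with hG'
  haveI : DecidableRel G'.Adj := fun a b => Classical.dec _
  have hc' : G'.Connected := by
    rw [SimpleGraph.connected_iff]
    refine ⟨fun a b => ?_, hc.nonempty⟩
    obtain ⟨p⟩ := hc.preconnected a b
    exact reach_del G key.2 p
  have hlow := count_lower G' hc'
  have hsub : G'.edgeFinset ⊆ G.edgeFinset := by
    intro e
    simp only [SimpleGraph.mem_edgeFinset]
    exact fun h => (SimpleGraph.edgeSet_subset_edgeSet.mpr sdiff_le) h
  have hmem : s(v, w) ∈ G.edgeFinset := by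
    rw [SimpleGraph.mem_edgeFinset, SimpleGraph.mem_edgeSet]; exact key.1
  have hnmem : s(v, w) ∉ G'.edgeFinset := by
    rw [SimpleGraph.mem_edgeFinset, SimpleGraph.mem_edgeSet]
    rw [hG']
    simp [SimpleGraph.sdiff_adj, SimpleGraph.fromEdgeSet_adj, key.1, key.1.ne]
  have hcard' : G'.edgeFinset.card < G.edgeFinset.card := by
    apply Finset.card_lt_card
    rw [Finset.ssubset_iff_of_subset hsub]
    exact ⟨s(v, w), hmem, hnmem⟩
  omega


end GeneralGraph

section ProxAux

variable {N : ℕ}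

theorem qrec (P : Matrix (Fin N) (Fin N) ℤ)
    (h0 : ∀ μ, P μ μ = 1) (h1 : ∀ μ ν : Fin N, μ < ν → P μ ν = 0)
    (hQ : P * P⁻¹ = 1) (μ ν : Fin N) :
    P⁻¹ μ ν = (if μ = ν then (1:ℤ) else 0) - ∑ ρ ∈ univ.filter (· < μ), P μ ρ * P⁻¹ ρ ν := by
  have h := congrFun (congrFun hQ μ) ν
  rw [Matrix.mul_apply] at h
  rw [← Finset.sum_filter_add_sum_filter_not univ (· < μ) (fun ρ => P μ ρ * P⁻¹ ρ ν)] at h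
  have h2 : ∑ ρ ∈ univ.filter (fun ρ => ¬ ρ < μ), P μ ρ * P⁻¹ ρ ν = P⁻¹ μ ν := by
    rw [Finset.sum_eq_single μ]
    · rw [h0]; ring
    · intro b hb hbne
      simp only [mem_filter, not_lt] at hb
      rw [h1 μ b (lt_of_le_of_ne hb.2 (Ne.symm hbne))]
      ring
    · simp
  rw [h2] at h
  have h3 : (1 : Matrix (Fin N) (Fin N) ℤ) μ ν = if μ = ν then 1 else 0 := by
    simp [Matrix.one_apply]
  rw [h3] at h
  linarith

theorem master [NeZero N] (P : Matrix (Fin N) (Fin N) ℤ) (hP : IsProximityMatrix P)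
    (hQ : P * P⁻¹ = 1) :
    ∀ μ : Fin N, (∀ ν, 0 ≤ P⁻¹ μ ν ∧ (μ < ν → P⁻¹ μ ν = 0)) ∧ P⁻¹ μ μ = 1 ∧
      1 ≤ P⁻¹ μ (0 : Fin N) := by
  obtain ⟨h0, h1, h2, h3, h4, h5⟩ := hP
  suffices H : ∀ n, ∀ μ : Fin N, μ.val < n →
      ((∀ ν, 0 ≤ P⁻¹ μ ν ∧ (μ < ν → P⁻¹ μ ν = 0)) ∧ P⁻¹ μ μ = 1 ∧
      1 ≤ P⁻¹ μ (0 : Fin N)) by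
    intro μ; exact H N μ μ.isLt
  intro n
  induction n with
  | zero => intro μ hμ; omega
  | succ n IHn =>
  intro μ hμ
  have IH : ∀ ρ : Fin N, ρ < μ →
      ((∀ ν, 0 ≤ P⁻¹ ρ ν ∧ (ρ < ν → P⁻¹ ρ ν = 0)) ∧ P⁻¹ ρ ρ = 1 ∧
      1 ≤ P⁻¹ ρ (0 : Fin N)) := by
    intro ρ hρ
    exact IHn ρ (by omega)
  have key : ∀ ν, P⁻¹ μ ν =
      (if μ = ν then (1:ℤ) else 0) + ∑ ρ ∈ univ.filter (· < μ), (-P μ ρ) * P⁻¹ ρ ν := by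
    intro ν
    rw [qrec P h0 h1 hQ μ ν]
    rw [sub_eq_add_neg, ← Finset.sum_neg_distrib]
    congr 1
    exact Finset.sum_congr rfl fun ρ _ => by ring
  have tnonneg : ∀ ν, ∀ ρ ∈ univ.filter (· < μ), 0 ≤ (-P μ ρ) * P⁻¹ ρ ν := by
    intro ν ρ hρ
    simp only [mem_filter] at hρ
    have hQnn := ((IH ρ hρ.2).1 ν).1
    rcases h2 μ ρ hρ.2 with h | h <;> rw [h] <;> [simp; linarith]
  have htri : ∀ ν, μ < ν → P⁻¹ μ ν = 0 := by
    intro ν hν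
    rw [key ν, if_neg (ne_of_lt hν)]
    rw [Finset.sum_eq_zero, add_zero]
    intro ρ hρ
    simp only [mem_filter] at hρ
    rw [((IH ρ hρ.2).1 ν).2 (lt_trans hρ.2 hν)]
    ring
  have hnn : ∀ ν, 0 ≤ P⁻¹ μ ν := by
    intro ν
    rw [key ν]
    have := Finset.sum_nonneg (tnonneg ν)
    split <;> linarith
  refine ⟨fun ν => ⟨hnn ν, htri ν⟩, ?_, ?_⟩
  · rw [key μ, if_pos rfl]
    rw [Finset.sum_eq_zero, add_zero]
    intro ρ hρ
    simp only [mem_filter] at hρ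
    rw [((IH ρ hρ.2).1 μ).2 hρ.2]
    ring
  · rcases eq_or_ne μ 0 with rfl | hne
    · rw [key 0, if_pos rfl]
      have := Finset.sum_nonneg (tnonneg 0)
      linarith
    · have hpos : (0 : Fin N) < μ := (Fin.zero_le μ).lt_of_ne (Ne.symm hne)
      obtain ⟨ρ₀, hρ₀⟩ := (h3 μ ⟨0, hpos⟩).1
      simp only [mem_filter] at hρ₀
      obtain ⟨-, hlt, hval⟩ := hρ₀
      have h1le : (1:ℤ) ≤ (-P μ ρ₀) * P⁻¹ ρ₀ 0 := by
        rw [hval]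
        have := (IH ρ₀ hlt).2.2
        linarith
      have hge : (-P μ ρ₀) * P⁻¹ ρ₀ 0 ≤ ∑ ρ ∈ univ.filter (· < μ), (-P μ ρ) * P⁻¹ ρ 0 := by
        apply Finset.single_le_sum (tnonneg 0)
        simp [hlt]
      rw [key 0]
      split <;> linarith

/-- number of ρ proximate to both μ and ν -/
def cA (P : Matrix (Fin N) (Fin N) ℤ) (μ ν : Fin N) : ℕ :=
  (univ.filter fun ρ => P ρ μ = -1 ∧ P ρ ν = -1).card

theorem negone_lt (P : Matrix (Fin N) (Fin N) ℤ) (hP : IsProximityMatrix P)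
    {μ ρ : Fin N} (h : P ρ μ = -1) : μ < ρ := by
  rcases lt_trichotomy ρ μ with hl | rfl | hl
  · rw [hP.2.1 ρ μ hl] at h; norm_num at h
  · rw [hP.1 ρ] at h; norm_num at h
  · exact hl

theorem ptp_symm (P : Matrix (Fin N) (Fin N) ℤ) (μ ν : Fin N) :
    (Pᵀ * P) μ ν = (Pᵀ * P) ν μ := by
  simp only [Matrix.mul_apply, Matrix.transpose_apply]
  exact Finset.sum_congr rfl fun x _ => mul_comm _ _

theorem ptp_eq (P : Matrix (Fin N) (Fin N) ℤ) (hP : IsProximityMatrix P)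
    {μ ν : Fin N} (hμν : μ < ν) :
    (Pᵀ * P) μ ν = P ν μ + (cA P μ ν : ℤ) := by
  obtain ⟨h0, h1, h2, h3, h4, h5⟩ := hP
  simp only [Matrix.mul_apply, Matrix.transpose_apply]
  rw [← Finset.sum_erase_add _ _ (mem_univ ν), h0 ν, mul_one, add_comm]
  congr 1
  have : ∀ ρ ∈ univ.erase ν, P ρ μ * P ρ ν =
      if (P ρ μ = -1 ∧ P ρ ν = -1) then (1:ℤ) else 0 := by
    intro ρ hρ
    have hρν : ρ ≠ ν := (mem_erase.mp hρ).1
    rcases lt_trichotomy ρ ν with hl | rfl | hl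
    · rw [h1 ρ ν hl, mul_zero, if_neg]; rintro ⟨-, h⟩; norm_num at h
    · exact absurd rfl hρν
    · rcases h2 ρ ν hl with ha | ha <;> rcases h2 ρ μ (lt_trans hμν hl) with hb | hb <;>
        rw [ha, hb] <;> simp
  rw [Finset.sum_congr rfl this, Finset.sum_boole]
  have he : (univ.erase ν).filter (fun ρ => P ρ μ = -1 ∧ P ρ ν = -1) =
      univ.filter (fun ρ => P ρ μ = -1 ∧ P ρ ν = -1) := by
    rw [Finset.filter_erase, Finset.erase_eq_of_notMem]
    simp only [mem_filter, not_and]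
    intro _ _
    rw [h0 ν]; norm_num
  rw [he]
  rfl

theorem cA_le_one (P : Matrix (Fin N) (Fin N) ℤ) (hP : IsProximityMatrix P)
    {μ ν : Fin N} (hμν : μ < ν) : cA P μ ν ≤ 1 := by
  apply Finset.card_le_one.mpr
  intro a ha b hb
  simp only [mem_filter] at ha hb
  exact hP.2.2.2.2.2 μ ν a b hμν ha.2.1 ha.2.2 hb.2.1 hb.2.2

theorem cA_pos_imp (P : Matrix (Fin N) (Fin N) ℤ) (hP : IsProximityMatrix P)
    {μ ν : Fin N} (hμν : μ < ν) (h : cA P μ ν ≠ 0) : P ν μ = -1 := by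
  obtain ⟨ρ, hρ⟩ := Finset.card_ne_zero.mp h
  simp only [mem_filter] at hρ
  exact hP.2.2.2.2.1 ρ μ ν hμν hρ.2.1 hρ.2.2

theorem offdiag (P : Matrix (Fin N) (Fin N) ℤ) (hP : IsProximityMatrix P)
    {μ ν : Fin N} (hμν : μ < ν) : (Pᵀ * P) μ ν = 0 ∨ (Pᵀ * P) μ ν = -1 := by
  rw [ptp_eq P hP hμν]
  rcases Nat.eq_or_lt_of_le (cA_le_one P hP hμν) with h | h
  · left
    rw [cA_pos_imp P hP hμν (by omega), h]
    norm_num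
  · have h0 : cA P μ ν = 0 := by omega
    rw [h0]
    rcases hP.2.2.1 ν μ hμν with h | h <;> rw [h] <;> simp

theorem adj_iff (P : Matrix (Fin N) (Fin N) ℤ) (hP : IsProximityMatrix P)
    {μ ν : Fin N} (hμν : μ < ν) :
    (graph P).Adj μ ν ↔ (P ν μ = -1 ∧ cA P μ ν = 0) := by
  have hc := cA_le_one P hP hμν
  constructor
  · rintro (⟨-, h⟩ : μ ≠ ν ∧ (Pᵀ * P) μ ν = -1)
    rw [ptp_eq P hP hμν] at h
    rcases Nat.eq_or_lt_of_le hc with h1 | h1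
    · have h2 := cA_pos_imp P hP hμν (by omega)
      rw [h2, h1] at h
      norm_num at h
    · have h0 : cA P μ ν = 0 := by omega
      rw [h0] at h
      push_cast at h
      exact ⟨by linarith, h0⟩
  · rintro ⟨h1, h2⟩
    refine (⟨hμν.ne, ?_⟩ : μ ≠ ν ∧ (Pᵀ * P) μ ν = -1)
    rw [ptp_eq P hP hμν, h1, h2]
    norm_num

theorem reach_of_prox (P : Matrix (Fin N) (Fin N) ℤ) (hP : IsProximityMatrix P) :
    ∀ ρ μ : Fin N, P ρ μ = -1 → (graph P).Reachable μ ρ := by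
  suffices H : ∀ k, ∀ ρ : Fin N, N - ρ.val ≤ k → ∀ μ, P ρ μ = -1 → (graph P).Reachable μ ρ by
    intro ρ μ h
    exact H N ρ (by omega) μ h
  intro k
  induction k with
  | zero => intro ρ h; have := ρ.isLt; omega
  | succ k IH =>
    intro ρ hρ μ h
    have hμρ : μ < ρ := negone_lt P hP h
    by_cases hc : cA P μ ρ = 0
    · exact ((adj_iff P hP hμρ).mpr ⟨h, hc⟩).reachable
    · obtain ⟨σ, hσ⟩ := Finset.card_ne_zero.mp hc
      simp only [mem_filter] at hσ
      obtain ⟨-, hσμ, hσρ⟩ := hσ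
      have hρσ : ρ < σ := negone_lt P hP hσρ
      have h1 : (graph P).Reachable μ σ := IH σ (by omega) μ hσμ
      have h2 : (graph P).Reachable ρ σ := IH σ (by omega) ρ hσρ
      exact h1.trans h2.symm

theorem graph_connected [NeZero N] (P : Matrix (Fin N) (Fin N) ℤ)
    (hP : IsProximityMatrix P) : (graph P).Connected := by
  rw [SimpleGraph.connected_iff]
  refine ⟨?_, ⟨0⟩⟩
  have H : ∀ n, ∀ ν : Fin N, ν.val < n → (graph P).Reachable ν 0 := by
    intro n
    induction n with
    | zero => intro ν h; omega
    | succ n IHn =>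
      intro ν hν
      rcases eq_or_ne ν 0 with rfl | hne
      · rfl
      · have hpos : (0 : Fin N) < ν := (Fin.zero_le ν).lt_of_ne (Ne.symm hne)
        obtain ⟨μ, hμ⟩ := (hP.2.2.2.1 ν ⟨0, hpos⟩).1
        simp only [mem_filter] at hμ
        obtain ⟨-, hlt, hval⟩ := hμ
        have h1 : (graph P).Reachable μ ν := reach_of_prox P hP ν μ hval
        have h2 : (graph P).Reachable μ 0 := IHn μ (by omega)
        exact h1.symm.trans h2
  intro a b
  exact (H N a a.isLt).trans (H N b b.isLt).symm

theorem edge_count [NeZero N] (P : Matrix (Fin N) (Fin N) ℤ) (hP : IsProximityMatrix P) :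
    (graph P).edgeFinset.card + 1 = N := by
  classical
  obtain ⟨h0, h1, h2, h3, h4, h5⟩ := hP
  set E := univ.filter (fun p : Fin N × Fin N => p.1 < p.2 ∧ (graph P).Adj p.1 p.2) with hE
  set A := univ.filter (fun p : Fin N × Fin N => p.1 < p.2 ∧ P p.2 p.1 = -1) with hA
  set Cov := univ.filter
    (fun p : Fin N × Fin N => p.1 < p.2 ∧ P p.2 p.1 = -1 ∧ cA P p.1 p.2 ≠ 0) with hCov
  set C := univ.filter
    (fun ρ : Fin N => (univ.filter fun μ => μ < ρ ∧ P ρ μ = -1).card = 2) with hC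
  -- step 1 : edgeFinset.card = E.card
  have step1 : (graph P).edgeFinset.card = E.card := by
    refine Eq.symm (Finset.card_bij (fun p _ => s(p.1, p.2)) ?_ ?_ ?_)
    · intro p hp
      rw [hE, mem_filter] at hp
      rw [SimpleGraph.mem_edgeFinset, SimpleGraph.mem_edgeSet]
      exact hp.2.2
    · intro p hp q hq h
      rw [hE, mem_filter] at hp hq
      rw [Sym2.eq_iff] at h
      rcases h with ⟨h1', h2'⟩ | ⟨h1', h2'⟩
      · exact Prod.ext h1' h2'
      · exfalso
        have := hp.2.1
        have := hq.2.1
        rw [← h1', ← h2'] at this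
        exact absurd (lt_trans hp.2.1 this) (lt_irrefl _)
    · intro e he
      induction e using Sym2.ind with
      | _ a b =>
        rw [SimpleGraph.mem_edgeFinset, SimpleGraph.mem_edgeSet] at he
        rcases lt_or_gt_of_ne he.ne with hab | hab
        · exact ⟨(a, b), by rw [hE, mem_filter]; exact ⟨mem_univ _, hab, he⟩, rfl⟩
        · exact ⟨(b, a), by rw [hE, mem_filter]; exact ⟨mem_univ _, hab, he.symm⟩,
            Sym2.eq_swap⟩
  -- step 2 : A.card = E.card + Cov.card
  have step2 : A.card = E.card + Cov.card := by
    rw [← Finset.card_filter_add_card_filter_not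
      (p := fun p : Fin N × Fin N => cA P p.1 p.2 = 0) (s := A)]
    congr 1
    · rw [hA, hE, Finset.filter_filter]
      congr 1
      apply Finset.filter_congr
      intro p _
      constructor
      · rintro ⟨h, hc⟩
        exact ⟨h.1, (adj_iff P ⟨h0, h1, h2, h3, h4, h5⟩ h.1).mpr ⟨h.2, hc⟩⟩
      · rintro ⟨hlt, hadj⟩
        obtain ⟨ha, hb⟩ := (adj_iff P ⟨h0, h1, h2, h3, h4, h5⟩ hlt).mp hadj
        exact ⟨⟨hlt, ha⟩, hb⟩
    · rw [hA, hCov, Finset.filter_filter]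
      congr 1
      apply Finset.filter_congr
      intro p _
      tauto
  -- step 3 : Cov.card = C.card
  have step3 : Cov.card = C.card := by
    have hmemprox : ∀ ρ ∈ C, ((univ.filter fun μ => μ < ρ ∧ P ρ μ = -1)).Nonempty := by
      intro ρ hρ
      rw [hC, mem_filter] at hρ
      rw [← Finset.card_pos, hρ.2]
      omega
    refine Eq.symm (Finset.card_bij (fun ρ hρ =>
      (((univ.filter fun μ => μ < ρ ∧ P ρ μ = -1)).min' (hmemprox ρ hρ),
       ((univ.filter fun μ => μ < ρ ∧ P ρ μ = -1)).max' (hmemprox ρ hρ))) ?_ ?_ ?_)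
    · intro ρ hρ
      have hc2 : ((univ.filter fun μ => μ < ρ ∧ P ρ μ = -1)).card = 2 := by
        rw [hC, mem_filter] at hρ; exact hρ.2
      set m := ((univ.filter fun μ => μ < ρ ∧ P ρ μ = -1)).min' (hmemprox ρ hρ) with hm
      set M := ((univ.filter fun μ => μ < ρ ∧ P ρ μ = -1)).max' (hmemprox ρ hρ) with hM
      have hmmem := Finset.min'_mem _ (hmemprox ρ hρ)
      have hMmem := Finset.max'_mem _ (hmemprox ρ hρ)
      rw [mem_filter] at hmmem hMmem
      have hlt : m < M := Finset.min'_lt_max'_of_card _ (by omega)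
      have hPMm : P M m = -1 := h4 ρ m M hlt hmmem.2.2 hMmem.2.2
      rw [hCov, mem_filter]
      refine ⟨mem_univ _, hlt, hPMm, ?_⟩
      apply Finset.card_ne_zero.mpr
      refine ⟨ρ, ?_⟩
      simp only [mem_filter]
      exact ⟨mem_univ _, hmmem.2.2, hMmem.2.2⟩
    · intro ρ₁ hρ₁ ρ₂ hρ₂ h
      have e1 := Finset.min'_mem _ (hmemprox ρ₁ hρ₁)
      have e2 := Finset.max'_mem _ (hmemprox ρ₁ hρ₁)
      have e3 := Finset.min'_mem _ (hmemprox ρ₂ hρ₂)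
      have e4 := Finset.max'_mem _ (hmemprox ρ₂ hρ₂)
      rw [mem_filter] at e1 e2 e3 e4
      have hc2 : ((univ.filter fun μ => μ < ρ₁ ∧ P ρ₁ μ = -1)).card = 2 := by
        rw [hC, mem_filter] at hρ₁; exact hρ₁.2
      have hlt : ((univ.filter fun μ => μ < ρ₁ ∧ P ρ₁ μ = -1)).min' (hmemprox ρ₁ hρ₁) <
          ((univ.filter fun μ => μ < ρ₁ ∧ P ρ₁ μ = -1)).max' (hmemprox ρ₁ hρ₁) :=
        Finset.min'_lt_max'_of_card _ (by omega)
      have hm := congrArg Prod.fst h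
      have hM := congrArg Prod.snd h
      simp only at hm hM
      rw [← hm] at e3
      rw [← hM] at e4
      exact h5 _ _ ρ₁ ρ₂ hlt e1.2.2 e2.2.2 e3.2.2 e4.2.2
    · rintro ⟨a, b⟩ hp
      rw [hCov, mem_filter] at hp
      obtain ⟨-, hlt, hpv, hcnz⟩ := hp
      obtain ⟨σ, hσ⟩ := Finset.card_ne_zero.mp hcnz
      rw [mem_filter] at hσ
      obtain ⟨-, hσ1, hσ2⟩ := hσ
      have hbσ : b < σ := negone_lt P ⟨h0, h1, h2, h3, h4, h5⟩ hσ2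
      have haσ : a < σ := lt_trans hlt hbσ
      have hsub : ({a, b} : Finset (Fin N)) ⊆ univ.filter fun μ => μ < σ ∧ P σ μ = -1 := by
        intro x hx
        rw [Finset.mem_insert, Finset.mem_singleton] at hx
        rw [mem_filter]
        rcases hx with rfl | rfl
        · exact ⟨mem_univ _, haσ, hσ1⟩
        · exact ⟨mem_univ _, hbσ, hσ2⟩
      have hcardle := (h3 σ ⟨a, haσ⟩).2
      have heq : (univ.filter fun μ => μ < σ ∧ P σ μ = -1) = {a, b} := by
        refine (Finset.eq_of_subset_of_card_le hsub ?_).symm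
        rw [Finset.card_pair hlt.ne]
        exact hcardle
      have hσC : σ ∈ C := by
        rw [hC, mem_filter]
        exact ⟨mem_univ _, by rw [heq, Finset.card_pair hlt.ne]⟩
      refine ⟨σ, hσC, ?_⟩
      have hne : ({a, b} : Finset (Fin N)).Nonempty := ⟨a, by simp⟩
      have hmin : ({a, b} : Finset (Fin N)).min' hne = a := by
        apply le_antisymm
        · exact Finset.min'_le _ a (by simp)
        · apply Finset.le_min'
          intro y hy
          rw [Finset.mem_insert, Finset.mem_singleton] at hy
          rcases hy with rfl | rfl
          · exact le_refl _
          · exact hlt.le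
      have hmax : ({a, b} : Finset (Fin N)).max' hne = b := by
        apply le_antisymm
        · apply Finset.max'_le
          intro y hy
          rw [Finset.mem_insert, Finset.mem_singleton] at hy
          rcases hy with rfl | rfl
          · exact hlt.le
          · exact le_refl _
        · exact Finset.le_max' _ b (by simp)
      simp only [heq]
      rw [Prod.mk.injEq]
      exact ⟨hmin, hmax⟩
  -- step 4 : A.card = (N - 1) + C.card
  have step4 : A.card = (N - 1) + C.card := by
    rw [hA, Finset.card_eq_sum_card_fiberwise
      (f := fun p : Fin N × Fin N => p.2) (t := univ) (fun p _ => mem_univ _)]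
    have hfib : ∀ ν : Fin N,
        ((univ.filter fun p : Fin N × Fin N => p.1 < p.2 ∧ P p.2 p.1 = -1).filter
          (fun p => p.2 = ν)).card = (univ.filter fun μ => μ < ν ∧ P ν μ = -1).card := by
      intro ν
      refine Finset.card_bij (fun p _ => p.1) ?_ ?_ ?_
      · intro p hp
        simp only [mem_filter] at hp ⊢
        obtain ⟨⟨-, h', h''⟩, hsnd⟩ := hp
        rw [hsnd] at h' h''
        exact ⟨mem_univ _, h', h''⟩
      · intro p hp q hq h
        simp only [mem_filter] at hp hq
        exact Prod.ext h (hp.2.trans hq.2.symm)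
      · intro μ hμ
        simp only [mem_filter] at hμ
        exact ⟨(μ, ν), by simp [hμ.2.1, hμ.2.2], rfl⟩
    rw [Finset.sum_congr rfl (fun ν _ => hfib ν)]
    have hzero : (univ.filter fun μ => μ < (0 : Fin N) ∧ P 0 μ = -1).card = 0 := by
      rw [Finset.card_eq_zero]
      apply Finset.filter_eq_empty_iff.mpr
      intro μ _
      rintro ⟨hlt, -⟩
      exact (Fin.zero_le μ).not_gt hlt
    rw [← Finset.sum_erase_add _ _ (mem_univ (0 : Fin N)), hzero, add_zero]
    have hterm : ∀ ν ∈ univ.erase (0 : Fin N),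
        (univ.filter fun μ => μ < ν ∧ P ν μ = -1).card =
        1 + (if (univ.filter fun μ => μ < ν ∧ P ν μ = -1).card = 2 then 1 else 0) := by
      intro ν hν
      have hne : ν ≠ 0 := (Finset.mem_erase.mp hν).1
      have hpos : (0 : Fin N) < ν := (Fin.zero_le ν).lt_of_ne (Ne.symm hne)
      obtain ⟨hnonempty, hle2⟩ := h3 ν ⟨0, hpos⟩
      have h1' : 1 ≤ (univ.filter fun μ => μ < ν ∧ P ν μ = -1).card :=
        Finset.card_pos.mpr hnonempty
      split_ifs with hsplit
      · omega
      · omega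
    rw [Finset.sum_congr rfl hterm, Finset.sum_add_distrib, Finset.sum_const, smul_eq_mul,
      mul_one, Finset.card_erase_of_mem (mem_univ _), Finset.card_univ, Fintype.card_fin]
    congr 1
    have hC0 : (0 : Fin N) ∉ (univ.filter fun ρ : Fin N =>
        (univ.filter fun μ => μ < ρ ∧ P ρ μ = -1).card = 2) := by
      intro h
      rw [mem_filter, hzero] at h
      omega
    have hCE : C = (univ.erase (0 : Fin N)).filter (fun ρ =>
        (univ.filter fun μ => μ < ρ ∧ P ρ μ = -1).card = 2) := by
      rw [hC, Finset.filter_erase, Finset.erase_eq_of_notMem hC0]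
    rw [hCE, Finset.card_filter]
  have hN : 1 ≤ N := Nat.one_le_iff_ne_zero.mpr (NeZero.ne N)
  omega

end ProxAux

/-- Basic properties of `Q = P⁻¹` and the dual graph: `Q` has nonnegative entries,
ones on the diagonal, `q_{ν1} ≥ 1`, the off-diagonal entries of `PᵀP` are `0` or `−1`,
and the resulting graph is a tree. -/
theorem statement_19 {N : ℕ} [NeZero N] (P : Matrix (Fin N) (Fin N) ℤ)
    (hP : IsProximityMatrix P) :
    (∀ μ ν, 0 ≤ P⁻¹ μ ν) ∧
    (∀ μ, P⁻¹ μ μ = 1) ∧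
    (∀ ν, 1 ≤ P⁻¹ ν (0 : Fin N)) ∧
    (∀ μ ν : Fin N, μ ≠ ν → (Pᵀ * P) μ ν = 0 ∨ (Pᵀ * P) μ ν = -1) ∧
    (graph P).IsTree := by
  have hdet : P.det = 1 := by
    rw [Matrix.det_of_lowerTriangular P (fun i j hij => hP.2.1 i j hij)]
    simp [hP.1]
  have hU : IsUnit P.det := by rw [hdet]; exact isUnit_one
  have hQ : P * P⁻¹ = 1 := Matrix.mul_nonsing_inv P hU
  have M := master P hP hQ
  refine ⟨fun μ ν => ((M μ).1 ν).1, fun μ => (M μ).2.1, fun ν => (M ν).2.2, ?_, ?_⟩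
  · intro μ ν hne
    rcases lt_or_gt_of_ne hne with h | h
    · exact offdiag P hP h
    · rw [ptp_symm]
      exact offdiag P hP h
  · apply tree_of_connected_card
    · exact graph_connected P hP
    · rw [Fintype.card_fin]
      exact edge_count P hP
end
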